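/- Consider the birth-and-death chain with parameters L ≥ 1 and α ∈ (0,1], and a time horizon T. Let A = (A_t)_{t=0}^T be any separating sequence such that 0 ∈ A_t and L ∉ A_t for all 0 ≤ t ≤ T. For 0 ≤ a ≤ T define the cyclically shifted separating sequence A^a = (A^a_t)_{t=0}^T by A^a_t := A_{(t+a) mod (T+1)}. Then S^A_T(0,L) ≤ S^{A^a}_T(0,L) + 12·L·α. -/

import Mathlib

open MeasureTheory Filter Topology

/-- Transition probabilities of the birth-and-death chain on `{0,…,L}` with parameter `α`:
`P(0,1) = P(L,L−1) = α`, `P(0,0) = P(L,L) = 1−α`, and `P(i,i+1) = P(i,i−1) = 1/2` for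
`0 < i < L`. -/
noncomputable def bdKernel (L : ℕ) (α : ℝ) (i j : ℕ) : ℝ :=
  if i = 0 then (if j = 1 then α else if j = 0 then 1 - α else 0)
  else if i = L then (if j = L - 1 then α else if j = L then 1 - α else 0)
  else if i < L then (if j = i + 1 ∨ j = i - 1 then 1 / 2 else 0)
  else 0

/-- `bdDist L α x t j = P^t(x, j)`, the probability that the birth-and-death chain started at
`x` is at state `j` at time `t`. -/
noncomputable def bdDist (L : ℕ) (α : ℝ) (x : ℕ) : ℕ → ℕ → ℝ
  | 0 => fun j => if j = x then 1 else 0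
  | t + 1 => fun j => ∑ i ∈ Finset.range (L + 1), bdDist L α x t i * bdKernel L α i j

/-- Total variation distance between two distributions on the state space `{0,…,L}`. -/
noncomputable def bdTV (L : ℕ) (μ ν : ℕ → ℝ) : ℝ :=
  ⨆ A : Set ℕ,
    |∑ i ∈ Finset.range (L + 1), Set.indicator A μ i -
      ∑ i ∈ Finset.range (L + 1), Set.indicator A ν i|

open Classical in
/-- `bdStay L α T x A = P(X_t ∈ A_t for all 0 ≤ t ≤ T | X_0 = x)` for the birth-and-death
chain with parameters `L` and `α`. -/
noncomputable def bdStay (L : ℕ) (α : ℝ) (T : ℕ) (x : ℕ) (A : ℕ → Set ℕ) : ℝ :=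
  ∑ p : Fin (T + 1) → Fin (L + 1),
    if (p 0 : ℕ) = x ∧ ∀ t : Fin (T + 1), (p t : ℕ) ∈ A (t : ℕ) then
      ∏ i : Fin T, bdKernel L α (p i.castSucc) (p i.succ) else 0

/-- The separation `S^A_T(0,L)` of a separating sequence `A` for the birth-and-death chain. -/
noncomputable def bdSep (L : ℕ) (α : ℝ) (T : ℕ) (A : ℕ → Set ℕ) : ℝ :=
  bdStay L α T 0 A + bdStay L α T L (fun t => (A t)ᶜ)

/-!
Rotating a path by `a` changes its weight only through the one transition it omits: the step
from time `T` back to time `0` is restored and the step from `a - 1` to `a` is dropped. So a path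
from a boundary state `x` that sits at `x` at times `a - 1`, `a` and `T` becomes, after rotation,
a path of the same weight admissible for the rotated sequence. Every other admissible path is in
the interior at one of these three times, and the chain started on the boundary is at a given
interior state with probability at most `2α`, because the measure equal to `1` on the boundary and
`2α` in the interior is reversible. Summing over the interior states, the three times and the two
endpoints gives `12 L α`.
-/

open Finset Matrix

theorem Finset.prod_erase_eq_prod_erase {ι M : Type*} [CommMonoid M] [DecidableEq ι]
    {s : Finset ι} {f : ι → M} {i j : ι} (hi : i ∈ s) (hj : j ∈ s) (h : f i = f j) :
    ∏ x ∈ s.erase i, f x = ∏ x ∈ s.erase j, f x := by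
  rcases eq_or_ne i j with rfl | hne
  · rfl
  rw [← mul_prod_erase _ f (mem_erase.2 ⟨hne.symm, hj⟩),
    ← mul_prod_erase _ f (mem_erase.2 ⟨hne, hi⟩), erase_right_comm, h]

theorem Fin.sum_univ_pi_snoc {S M : Type*} [Fintype S] [AddCommMonoid M] {n : ℕ}
    (f : (Fin (n + 1) → S) → M) :
    ∑ p, f p = ∑ q : Fin n → S, ∑ z, f (Fin.snoc q z) := by
  rw [← (Fin.snocEquiv fun _ => S).sum_comp, Fintype.sum_prod_type, sum_comm]
  rfl

section PathWeight

variable {S : Type*} {M : Matrix S S ℝ}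

variable (M) in
def pathWeight {T : ℕ} (p : Fin (T + 1) → S) : ℝ :=
  ∏ i : Fin T, M (p i.castSucc) (p i.succ)

theorem pathWeight_nonneg (hM : ∀ i j, 0 ≤ M i j) {T : ℕ} (p : Fin (T + 1) → S) :
    0 ≤ pathWeight M p :=
  prod_nonneg fun _ _ => hM _ _

theorem pathWeight_snoc {T : ℕ} (q : Fin (T + 1) → S) (z : S) :
    pathWeight M (Fin.snoc q z : Fin (T + 2) → S) = pathWeight M q * M (q (Fin.last T)) z := by
  simp only [pathWeight, Fin.prod_univ_castSucc, Fin.succ_castSucc, Fin.snoc_castSucc,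
    Fin.succ_last, Fin.snoc_last]

theorem pathWeight_eq_prod_erase_last {T : ℕ} (p : Fin (T + 1) → S) :
    pathWeight M p = ∏ i ∈ univ.erase (Fin.last T), M (p i) (p (i + 1)) := by
  have : univ.erase (Fin.last T) = univ.map Fin.castSuccEmb := by
    ext; simp [Fin.exists_castSucc_eq]
  simp [this, pathWeight, Fin.coeSucc_eq_succ]

theorem pathWeight_comp_add_right {T : ℕ} (p : Fin (T + 1) → S) (a : Fin (T + 1))
    (h : M (p (Fin.last T)) (p 0) = M (p (a - 1)) (p a)) :
    pathWeight M (fun t => p (t + a)) = pathWeight M p := by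
  set g : Fin (T + 1) → ℝ := fun i => M (p i) (p (i + 1))
  have hlast : Fin.last T + a = a - 1 := by
    rw [eq_neg_of_add_eq_zero_left (Fin.last_add_one T), neg_add_eq_sub]
  calc pathWeight M (fun t => p (t + a))
      = ∏ i ∈ univ.erase (Fin.last T), g (i + a) := by
        simp only [pathWeight_eq_prod_erase_last, g, add_right_comm]
    _ = ∏ i ∈ univ.erase (a - 1), g i :=
        prod_equiv (Equiv.addRight a) (by simp [← hlast]) fun _ _ => rfl
    _ = pathWeight M p := by
        rw [pathWeight_eq_prod_erase_last]
        exact prod_erase_eq_prod_erase (mem_univ _) (mem_univ _) (by simp [g, h])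

theorem rotate_admissible_or_exists_mem {T : ℕ} {x : S} {I : Set S}
    {B : Fin (T + 1) → Set S} (hB : ∀ t, B t ⊆ insert x I) (a : Fin (T + 1))
    {p : Fin (T + 1) → S} (hp : p 0 = x ∧ ∀ t, p t ∈ B t) :
    ((p (0 + a) = x ∧ ∀ t, p (t + a) ∈ B (t + a)) ∧
        pathWeight M (fun t => p (t + a)) = pathWeight M p) ∨
      ∃ t ∈ ({a - 1, a, Fin.last T} : Finset _), p t ∈ I := by
  by_cases hR : ∀ t ∈ ({a - 1, a, Fin.last T} : Finset _), p t = x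
  · refine Or.inl ⟨⟨by simpa using hR a (by simp), fun t => hp.2 _⟩, ?_⟩
    exact pathWeight_comp_add_right p a (by
      rw [hR _ (by simp), hp.1, hR _ (by simp), hR a (by simp)])
  · obtain ⟨t, ht, hpt⟩ := not_forall₂.mp hR
    exact Or.inr ⟨t, ht, by simpa [hpt] using hB t (hp.2 t)⟩

variable [Fintype S] [DecidableEq S]

theorem sum_pathWeight_eq_pow_apply (hM : M ∈ rowStochastic ℝ S) (x y : S) {T : ℕ}
    (t : Fin (T + 1)) :
    ∑ p : Fin (T + 1) → S, (if p 0 = x ∧ p t = y then pathWeight M p else 0) =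
      (M ^ (t : ℕ)) x y := by
  induction T generalizing y with
  | zero =>
    obtain rfl : t = 0 := Fin.fin_one_eq_zero t
    rw [← (Equiv.funUnique (Fin 1) S).symm.sum_comp]
    rcases eq_or_ne x y with rfl | hxy
    · simp [pathWeight]
    · simp [pathWeight, one_apply, hxy]
  | succ T ih =>
    have hzero (q : Fin (T + 1) → S) (z : S) : (Fin.snoc q z : Fin (T + 2) → S) 0 = q 0 := by
      simp only [← Fin.castSucc_zero, Fin.snoc_castSucc]
    rw [Fin.sum_univ_pi_snoc]
    simp only [pathWeight_snoc, hzero]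
    induction t using Fin.lastCases with
    | last =>
      have ih' := fun w => ih w (Fin.last T)
      simp only [Fin.val_last] at ih'
      simp_rw [Fin.snoc_last, Fin.val_last, pow_succ, mul_apply, ← ih', sum_mul, ite_mul, zero_mul,
        ite_and]
      conv_rhs => rw [sum_comm]
      refine sum_congr rfl fun q _ => ?_
      split_ifs <;> simp
    | cast s =>
      simp only [Fin.snoc_castSucc, Fin.val_castSucc, ← ih _ s]
      refine sum_congr rfl fun q _ => ?_
      split_ifs
      · rw [← mul_sum, sum_row_of_mem_rowStochastic hM, mul_one]
      · simp

theorem sum_pathWeight_mem_eq_sum_pow_apply (hM : M ∈ rowStochastic ℝ S) (x : S) (I : Finset S)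
    {T : ℕ} (t : Fin (T + 1)) :
    ∑ p : Fin (T + 1) → S, (if p 0 = x ∧ p t ∈ I then pathWeight M p else 0) =
      ∑ y ∈ I, (M ^ (t : ℕ)) x y := by
  simp_rw [← sum_pathWeight_eq_pow_apply hM x]
  rw [sum_comm]
  refine sum_congr rfl fun p _ => ?_
  simp [ite_and]

open Classical in
variable (M) in
noncomputable def stayWeight {T : ℕ} (x : S) (B : Fin (T + 1) → Set S) : ℝ :=
  ∑ p : Fin (T + 1) → S, if p 0 = x ∧ ∀ t, p t ∈ B t then pathWeight M p else 0

theorem stayWeight_le_stayWeight_rotate_add (hM : M ∈ rowStochastic ℝ S) {T : ℕ} (x : S)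
    (I : Finset S) (B : Fin (T + 1) → Set S) (hB : ∀ t, B t ⊆ insert x ↑I) (a : Fin (T + 1)) :
    stayWeight M x B ≤ stayWeight M x (fun t => B (t + a)) +
      ∑ t ∈ {a - 1, a, Fin.last T}, ∑ y ∈ I, (M ^ (t : ℕ)) x y := by
  classical
  have hW (p : Fin (T + 1) → S) : 0 ≤ pathWeight M p :=
    pathWeight_nonneg (fun _ _ => nonneg_of_mem_rowStochastic hM) p
  let stay (B : Fin (T + 1) → Set S) (p : Fin (T + 1) → S) : ℝ :=
    if p 0 = x ∧ ∀ t, p t ∈ B t then pathWeight M p else 0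
  let visit (p : Fin (T + 1) → S) (t : Fin (T + 1)) : ℝ :=
    if p 0 = x ∧ p t ∈ I then pathWeight M p else 0
  have hstay B p : 0 ≤ stay B p := ite_nonneg (hW p) le_rfl
  have hvisit p : 0 ≤ ∑ t ∈ {a - 1, a, Fin.last T}, visit p t :=
    sum_nonneg fun _ _ => ite_nonneg (hW p) le_rfl
  have key (p : Fin (T + 1) → S) :
      stay B p ≤ stay (fun t => B (t + a)) (fun t => p (t + a)) +
        ∑ t ∈ {a - 1, a, Fin.last T}, visit p t := by
    by_cases hp : p 0 = x ∧ ∀ t, p t ∈ B t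
    · rcases rotate_admissible_or_exists_mem (M := M) hB a hp with
        ⟨hrot, hw⟩ | ⟨t, ht, hI⟩
      · simp only [stay, if_pos hp, if_pos hrot, hw]
        exact le_add_of_nonneg_right (hvisit p)
      · calc stay B p = visit p t := by
              simp only [stay, visit]; rw [if_pos hp, if_pos ⟨hp.1, mem_coe.mp hI⟩]
          _ ≤ ∑ t ∈ {a - 1, a, Fin.last T}, visit p t :=
              single_le_sum (f := visit p) (fun _ _ => ite_nonneg (hW p) le_rfl) ht
          _ ≤ _ := le_add_of_nonneg_left (hstay _ fun t => p (t + a))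
    · rw [show stay B p = 0 from if_neg hp]
      exact add_nonneg (hstay _ fun t => p (t + a)) (hvisit p)
  have hrot : ∑ p : Fin (T + 1) → S, stay (fun t => B (t + a)) (fun t => p (t + a)) =
      stayWeight M x (fun t => B (t + a)) :=
    Fintype.sum_equiv ((Equiv.addRight a).symm.arrowCongr (Equiv.refl S)) _ _ fun _ => rfl
  calc stayWeight M x B = ∑ p, stay B p := rfl
    _ ≤ ∑ p, (stay (fun t => B (t + a)) (fun t => p (t + a)) +
          ∑ t ∈ {a - 1, a, Fin.last T}, visit p t) := sum_le_sum fun p _ => key p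
    _ = _ := by
        rw [sum_add_distrib, hrot, sum_comm]
        simp only [visit, sum_pathWeight_mem_eq_sum_pow_apply hM]

end PathWeight

section Invariant

variable {S : Type*} [Fintype S] {M : Matrix S S ℝ} {π : S → ℝ}

theorem vecMul_eq_of_detailed_balance (hM : ∀ i, ∑ j, M i j = 1)
    (hπ : ∀ i j, π i * M i j = π j * M j i) : π ᵥ* M = π := by
  ext j
  simp [vecMul, dotProduct, hπ, ← mul_sum, hM]

variable [DecidableEq S]

theorem vecMul_pow_eq_self (h : π ᵥ* M = π) (t : ℕ) : π ᵥ* (M ^ t) = π := by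
  induction t with
  | zero => simp
  | succ t ih => rw [pow_succ, ← vecMul_vecMul, ih, h]

theorem mul_pow_apply_le_of_vecMul_eq (hM : M ∈ rowStochastic ℝ S) (hπ : 0 ≤ π)
    (h : π ᵥ* M = π) (t : ℕ) (x y : S) : π x * (M ^ t) x y ≤ π y :=
  calc π x * (M ^ t) x y ≤ ∑ z, π z * (M ^ t) z y :=
        single_le_sum (f := fun z => π z * (M ^ t) z y)
          (fun z _ => mul_nonneg (hπ z) (nonneg_of_mem_rowStochastic (pow_mem hM t)))
          (mem_univ x)
    _ = π y := congrFun (vecMul_pow_eq_self h t) y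

end Invariant

section BirthDeath

variable {L : ℕ} {α : ℝ}

theorem bdKernel_nonneg (hα₀ : 0 ≤ α) (hα₁ : α ≤ 1) (i j : ℕ) : 0 ≤ bdKernel L α i j := by
  unfold bdKernel
  split_ifs <;> linarith

theorem bdKernel_row_sum (hL : 1 ≤ L) {i : ℕ} (hi : i ≤ L) :
    ∑ j ∈ range (L + 1), bdKernel L α i j = 1 := by
  obtain ⟨u, v, huv, hu, hv, hsum, hzero⟩ : ∃ u v, u ≠ v ∧ u ≤ L ∧ v ≤ L ∧
      bdKernel L α i u + bdKernel L α i v = 1 ∧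
      ∀ c, c ≠ u → c ≠ v → bdKernel L α i c = 0 := by
    rcases (by omega : i = 0 ∨ i = L ∨ (0 < i ∧ i < L)) with hi' | hi' | hi' <;>
      [refine ⟨0, 1, ?_⟩; refine ⟨L - 1, L, ?_⟩; refine ⟨i - 1, i + 1, ?_⟩] <;>
      refine ⟨by omega, by omega, by omega, ?_, fun c hcu hcv => ?_⟩ <;>
      unfold bdKernel <;> split_ifs <;> first | ring1 | (exfalso; omega)
  rw [sum_eq_add_of_mem u v (by simpa [Nat.lt_succ_iff]) (by simpa [Nat.lt_succ_iff]) huv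
    (fun c _ hc => hzero c hc.1 hc.2), hsum]

variable (L α) in
noncomputable def bdMatrix : Matrix (Fin (L + 1)) (Fin (L + 1)) ℝ :=
  Matrix.of fun i j => bdKernel L α i j

theorem bdMatrix_mem_rowStochastic (hL : 1 ≤ L) (hα₀ : 0 ≤ α) (hα₁ : α ≤ 1) :
    bdMatrix L α ∈ rowStochastic ℝ (Fin (L + 1)) := by
  refine mem_rowStochastic_iff_sum.2 ⟨fun i j => bdKernel_nonneg hα₀ hα₁ i j, fun i => ?_⟩
  simpa [bdMatrix, Fin.sum_univ_eq_sum_range (bdKernel L α i)] using bdKernel_row_sum hL i.is_le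

variable (L α) in
noncomputable def bdReversibleMeasure (i : Fin (L + 1)) : ℝ :=
  if (i : ℕ) = 0 ∨ (i : ℕ) = L then 1 else 2 * α

theorem bdReversibleMeasure_mul_bdMatrix_comm (i j : Fin (L + 1)) :
    bdReversibleMeasure L α i * bdMatrix L α i j =
      bdReversibleMeasure L α j * bdMatrix L α j i := by
  have := i.is_le
  have := j.is_le
  simp only [bdReversibleMeasure, bdMatrix, of_apply]
  unfold bdKernel
  split_ifs <;> first | ring1 | (exfalso; omega)

theorem bdMatrix_pow_apply_le (hL : 1 ≤ L) (hα₀ : 0 ≤ α) (hα₁ : α ≤ 1) {x y : Fin (L + 1)}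
    (hx : (x : ℕ) = 0 ∨ (x : ℕ) = L) (hy : ¬((y : ℕ) = 0 ∨ (y : ℕ) = L)) (t : ℕ) :
    (bdMatrix L α ^ t) x y ≤ 2 * α := by
  have hM := bdMatrix_mem_rowStochastic hL hα₀ hα₁
  have hπ := vecMul_eq_of_detailed_balance (sum_row_of_mem_rowStochastic hM)
    bdReversibleMeasure_mul_bdMatrix_comm
  have hπ₀ : 0 ≤ bdReversibleMeasure L α := fun i => by
    simp only [Pi.zero_apply, bdReversibleMeasure]
    split_ifs <;> linarith
  have := mul_pow_apply_le_of_vecMul_eq hM hπ₀ hπ t x y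
  rwa [bdReversibleMeasure, bdReversibleMeasure, if_pos hx, if_neg hy, one_mul] at this

theorem stayWeight_bdMatrix_le (hL : 1 ≤ L) (hα₀ : 0 ≤ α) (hα₁ : α ≤ 1) {x : Fin (L + 1)}
    (hx : (x : ℕ) = 0 ∨ (x : ℕ) = L) {T : ℕ} (B : Fin (T + 1) → Set (Fin (L + 1)))
    (hB : ∀ t, x.rev ∉ B t) (a : Fin (T + 1)) :
    stayWeight (bdMatrix L α) x B ≤
      stayWeight (bdMatrix L α) x (fun t => B (t + a)) + 6 * L * α := by
  set I : Finset (Fin (L + 1)) := {i | ¬((i : ℕ) = 0 ∨ (i : ℕ) = L)}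
  have hI : #I ≤ L :=
    calc #I ≤ #(univ.erase (0 : Fin (L + 1))) :=
          card_le_card fun i hi => mem_erase.2 ⟨fun h => by simp [I, h] at hi, mem_univ _⟩
      _ = L := by simp
  have hBI t : B t ⊆ insert x ↑I := fun i hi => by
    have hne : (i : ℕ) ≠ x.rev := fun h => hB t (Fin.ext h ▸ hi)
    have hrev := Fin.val_rev x
    rw [Set.mem_insert_iff, mem_coe, mem_filter, Fin.ext_iff]
    refine Or.imp_right (And.intro (mem_univ i)) ?_
    omega
  refine (stayWeight_le_stayWeight_rotate_add (bdMatrix_mem_rowStochastic hL hα₀ hα₁)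
    x I B hBI a).trans ?_
  gcongr
  calc ∑ t ∈ {a - 1, a, Fin.last T}, ∑ y ∈ I, (bdMatrix L α ^ (t : ℕ)) x y
      ≤ ∑ t ∈ {a - 1, a, Fin.last T}, ∑ y ∈ I, 2 * α :=
        sum_le_sum fun t _ => sum_le_sum fun y hy =>
          bdMatrix_pow_apply_le hL hα₀ hα₁ hx (mem_filter.1 hy).2 t
    _ ≤ 3 * (L * (2 * α)) := by
        simp only [sum_const, nsmul_eq_mul]
        gcongr
        exact_mod_cast card_le_three
    _ = 6 * L * α := by ring

theorem bdStay_eq_stayWeight (T : ℕ) (A : ℕ → Set ℕ) {x : ℕ} (y : Fin (L + 1))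
    (hy : (y : ℕ) = x) :
    bdStay L α T x A =
      stayWeight (bdMatrix L α) y (fun t : Fin (T + 1) => {i | (i : ℕ) ∈ A t}) := by
  subst hy
  classical
  exact sum_congr rfl fun p _ => if_congr (and_congr Fin.val_inj Iff.rfl) rfl rfl

end BirthDeath

theorem separation_cyclic_shift_general (L : ℕ) (hL : 1 ≤ L) (α : ℝ) (hα : α ∈ Set.Ioc (0 : ℝ) 1)
    (T : ℕ) (A : ℕ → Set ℕ) (hA : ∀ t ≤ T, 0 ∈ A t ∧ (L : ℕ) ∉ A t)
    (a : ℕ) :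
    bdSep L α T A ≤ bdSep L α T (fun t => A ((t + a) % (T + 1))) + 12 * L * α := by
  have hshift (t : Fin (T + 1)) :
      ((t + Fin.ofNat (T + 1) a : Fin (T + 1)) : ℕ) = (t + a) % (T + 1) := by
    simp [Fin.val_add]
  have h₀ := stayWeight_bdMatrix_le hL hα.1.le hα.2 (x := 0) (Or.inl rfl)
    (fun t => {i | (i : ℕ) ∈ A t}) (fun t => by simpa using (hA t t.is_le).2)
    (Fin.ofNat (T + 1) a)
  have h₁ := stayWeight_bdMatrix_le hL hα.1.le hα.2 (x := Fin.last L) (Or.inr rfl)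
    (fun t => {i | (i : ℕ) ∈ (A t)ᶜ}) (fun t => by simpa using (hA t t.is_le).1)
    (Fin.ofNat (T + 1) a)
  simp only [hshift] at h₀ h₁
  rw [bdSep, bdSep, bdStay_eq_stayWeight (x := 0) T A 0 rfl,
    bdStay_eq_stayWeight (x := L) T _ (Fin.last L) rfl, bdStay_eq_stayWeight (x := 0) T _ 0 rfl,
    bdStay_eq_stayWeight (x := L) T _ (Fin.last L) rfl]
  linarith

/-- Cyclic shifts of a separating sequence with `0 ∈ A_t`, `L ∉ A_t` lose at most `12·L·α`
in separation: `S^A_T(0,L) ≤ S^{A^a}_T(0,L) + 12·L·α` where `A^a_t = A_{(t+a) mod (T+1)}`. -/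
theorem separation_cyclic_shift (L : ℕ) (hL : 1 ≤ L) (α : ℝ) (hα : α ∈ Set.Ioc (0 : ℝ) 1)
    (T : ℕ) (A : ℕ → Set ℕ) (hA : ∀ t ≤ T, 0 ∈ A t ∧ (L : ℕ) ∉ A t)
    (a : ℕ) (ha : a ≤ T) :
    bdSep L α T A ≤ bdSep L α T (fun t => A ((t + a) % (T + 1))) + 12 * L * α :=
  separation_cyclic_shift_general L hL α hα T A hA a
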